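/- Let n ≥ 3 be an integer, F : ℝ^n → ℂ an ℝ-linear map with ker F ∩ ℤ^n = {0}. Then there exists a constant c > 0, depending only on n and F, such that for every δ ∈ (0,1] there is a nonzero b ∈ ℤ^n with ‖b‖₂ ≤ c·δ^{−2/(n−2)} and 0 < |F(b)| ≤ δ. -/

import Mathlib

/-!
Dirichlet's pigeonhole argument. The `(M + 1)ⁿ` lattice points of the box `{0, …, M}ⁿ` are mapped
by `F` into the disc of radius `‖F‖ √n M`, which meets about `(‖F‖ √n M / δ)²` squares of side
`δ / 2`. Once `Mⁿ⁻² ≳ δ⁻²`, that is `M ≈ δ^(-2/(n-2))`, two of the points lie in the same square,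
and their difference `b` is a nonzero integer vector with `‖b‖ ≤ √n M` and `|F b| < δ`; moreover
`F b ≠ 0` since `F` vanishes at no nonzero lattice point.
-/

/-- The point of `ℝ^n` (with Euclidean norm) corresponding to an integer vector. -/
def latticeVec (n : ℕ) (b : Fin n → ℤ) : EuclideanSpace ℝ (Fin n) := WithLp.toLp 2 (fun i => (b i : ℝ))

open Finset

theorem EuclideanSpace.norm_le_sqrt_card_mul {ι : Type*} [Fintype ι] (x : EuclideanSpace ℝ ι)
    {C : ℝ} (hx : ∀ i, ‖x i‖ ≤ C) : ‖x‖ ≤ √(Fintype.card ι) * C := by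
  rcases isEmpty_or_nonempty ι with hι | ⟨⟨i₀⟩⟩
  · simp [EuclideanSpace.norm_eq]
  have hC : 0 ≤ C := (norm_nonneg _).trans (hx i₀)
  calc ‖x‖ = √(∑ i, ‖x i‖ ^ 2) := EuclideanSpace.norm_eq x
    _ ≤ √(∑ _i : ι, C ^ 2) := by gcongr with i; exact hx i
    _ = √(Fintype.card ι) * C := by
      rw [sum_const, card_univ, nsmul_eq_mul, Real.sqrt_mul (Nat.cast_nonneg _), Real.sqrt_sq hC]

theorem latticeVec_sub (n : ℕ) (b c : Fin n → ℤ) :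
    latticeVec n (b - c) = latticeVec n b - latticeVec n c := by
  ext i
  simp [latticeVec]

theorem norm_latticeVec_le {n M : ℕ} {b : Fin n → ℤ} (hb : ∀ i, |b i| ≤ M) :
    ‖latticeVec n b‖ ≤ √n * M := by
  simpa using EuclideanSpace.norm_le_sqrt_card_mul (latticeVec n b) (C := M) fun i => by
    simpa [latticeVec, Real.norm_eq_abs, ← Int.cast_abs] using (Int.cast_le (R := ℝ)).2 (hb i)

theorem abs_sub_lt_of_floor_div_eq {a b s : ℝ} (hs : 0 < s) (h : ⌊a / s⌋ = ⌊b / s⌋) :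
    |a - b| < s := by
  have := Int.abs_sub_lt_one_of_floor_eq_floor h
  rwa [← sub_div, abs_div, abs_of_pos hs, div_lt_one hs] at this

theorem Complex.norm_sub_lt_of_floor_div_eq {z w : ℂ} {s : ℝ} (hs : 0 < s)
    (hre : ⌊z.re / s⌋ = ⌊w.re / s⌋) (him : ⌊z.im / s⌋ = ⌊w.im / s⌋) : ‖z - w‖ < 2 * s := by
  calc ‖z - w‖ ≤ |(z - w).re| + |(z - w).im| := Complex.norm_le_abs_re_add_abs_im _
    _ < s + s := by
      rw [Complex.sub_re, Complex.sub_im]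
      exact add_lt_add (abs_sub_lt_of_floor_div_eq hs hre) (abs_sub_lt_of_floor_div_eq hs him)
    _ = 2 * s := (two_mul s).symm

theorem card_Icc_floor_neg_floor_le {x : ℝ} (hx : 0 ≤ x) :
    (#(Icc ⌊-x⌋ ⌊x⌋) : ℝ) ≤ 2 * x + 2 := by
  rw [Int.card_Icc, Int.floor_neg, sub_neg_eq_add]
  have hfloor := Int.floor_le x
  have hceil := Int.ceil_lt_add_one x
  have hnonneg : 0 ≤ ⌊x⌋ + 1 + ⌈x⌉ := by
    have := Int.floor_nonneg.2 hx
    have := Int.ceil_nonneg hx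
    omega
  rw [← Int.cast_natCast, Int.toNat_of_nonneg hnonneg]
  push_cast
  linarith

/-- Pigeonhole on the grid of squares of side `s`: the square `[-r, r]²` meets fewer than
`(2 r / s + 2)²` of them. -/
theorem Complex.exists_ne_norm_sub_lt_of_card_lt {ι : Type*} [Fintype ι] (f : ι → ℂ) {r s : ℝ}
    (hs : 0 < s) (hf : ∀ i, ‖f i‖ ≤ r) (hcard : (2 * (r / s) + 2) ^ 2 < Fintype.card ι) :
    ∃ i j, i ≠ j ∧ ‖f i - f j‖ < 2 * s := by
  have hι : Nonempty ι := Fintype.card_pos_iff.1 (by exact_mod_cast (sq_nonneg _).trans_lt hcard)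
  have hr : 0 ≤ r := (norm_nonneg _).trans (hf hι.some)
  let cell : ℂ → ℤ × ℤ := fun z => (⌊z.re / s⌋, ⌊z.im / s⌋)
  let cells := Icc ⌊-(r / s)⌋ ⌊r / s⌋ ×ˢ Icc ⌊-(r / s)⌋ ⌊r / s⌋
  have hmem : ∀ {t : ℝ}, |t| ≤ r → ⌊t / s⌋ ∈ Icc ⌊-(r / s)⌋ ⌊r / s⌋ := fun ht => by
    rw [abs_le] at ht
    rw [mem_Icc, ← neg_div]
    exact ⟨Int.floor_mono (by gcongr; exact ht.1), Int.floor_mono (by gcongr; exact ht.2)⟩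
  have hmaps : ∀ i ∈ (univ : Finset ι), cell (f i) ∈ cells := fun i _ =>
    mem_product.2 ⟨hmem ((Complex.abs_re_le_norm _).trans (hf i)),
      hmem ((Complex.abs_im_le_norm _).trans (hf i))⟩
  have hcells : #cells < #(univ : Finset ι) := by
    have h := card_Icc_floor_neg_floor_le (div_nonneg hr hs.le)
    have : (#cells : ℝ) < #(univ : Finset ι) := by
      rw [card_product, Nat.cast_mul, card_univ, ← sq]
      exact (pow_le_pow_left₀ (Nat.cast_nonneg _) h 2).trans_lt hcard
    exact_mod_cast this
  obtain ⟨i, -, j, -, hij, hcell⟩ := exists_ne_map_eq_of_card_lt_of_maps_to hcells hmaps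
  exact ⟨i, j, hij, Complex.norm_sub_lt_of_floor_div_eq hs (congrArg Prod.fst hcell)
    (congrArg Prod.snd hcell)⟩

theorem exists_ne_zero_norm_latticeVec_le_of_card_lt {n : ℕ}
    (F : EuclideanSpace ℝ (Fin n) →L[ℝ] ℂ) (M : ℕ) {s : ℝ} (hs : 0 < s)
    (hcard : (2 * (‖F‖ * (√n * M) / s) + 2) ^ 2 < ((M : ℝ) + 1) ^ n) :
    ∃ b : Fin n → ℤ, b ≠ 0 ∧ ‖latticeVec n b‖ ≤ √n * M ∧ ‖F (latticeVec n b)‖ < 2 * s := by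
  let point : (Fin n → Fin (M + 1)) → Fin n → ℤ := fun v i => ((v i : ℕ) : ℤ)
  have hpoint : ∀ v i, |point v i| ≤ M := fun v i => by
    have := (v i).isLt
    simp only [point, Nat.abs_cast]
    omega
  obtain ⟨v, w, hvw, hF⟩ := Complex.exists_ne_norm_sub_lt_of_card_lt
    (fun v => F (latticeVec n (point v))) hs
    (fun v => F.le_opNorm_of_le (norm_latticeVec_le (hpoint v)))
    (by simpa using hcard)
  refine ⟨point v - point w, ?_, norm_latticeVec_le fun i => ?_, by rwa [latticeVec_sub, map_sub]⟩
  · obtain ⟨i, hi⟩ := Function.ne_iff.1 hvw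
    refine Function.ne_iff.2 ⟨i, ?_⟩
    simpa [point, sub_eq_zero, Fin.val_inj] using hi
  · have := (v i).isLt
    have := (w i).isLt
    simp only [Pi.sub_apply, point]
    rw [abs_le]
    omega

theorem sq_mul_le_pow_of_rpow_le {n : ℕ} (hn : 2 < n) {x M : ℝ} (hx : 0 ≤ x)
    (h : x ^ (2 / ((n : ℝ) - 2)) ≤ M) : (x * M) ^ 2 ≤ M ^ n := by
  have hx2 : x ^ 2 = (x ^ (2 / ((n : ℝ) - 2))) ^ (n - 2) := by
    rw [← Real.rpow_mul_natCast hx, Nat.cast_sub hn.le, ← Real.rpow_natCast]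
    congr 1
    have : (n : ℝ) - 2 ≠ 0 := by
      have : (2 : ℝ) < n := by exact_mod_cast hn
      linarith
    field_simp
    push_cast
    ring
  calc (x * M) ^ 2 = x ^ 2 * M ^ 2 := mul_pow x M 2
    _ ≤ M ^ (n - 2) * M ^ 2 := by rw [hx2]; gcongr
    _ = M ^ n := pow_sub_mul_pow M hn.le

/-- The side length of the box of lattice points to which the pigeonhole principle is applied,
for a linear map of operator norm `A`: `M ≈ ((4 A √n + 2) / δ) ^ (2 / (n - 2))`. -/
theorem exists_box_size {n : ℕ} (hn : 3 ≤ n) {A : ℝ} (hA : 0 ≤ A) :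
    ∃ c > (0 : ℝ), ∀ δ : ℝ, 0 < δ → δ ≤ 1 → ∃ M : ℕ,
      √n * M ≤ c * δ ^ (-2 / ((n : ℝ) - 2)) ∧
      (2 * (A * (√n * M) / (δ / 2)) + 2) ^ 2 < ((M : ℝ) + 1) ^ n := by
  set K := 4 * A * √n + 2
  set e := 2 / ((n : ℝ) - 2)
  have hK : 2 ≤ K := le_add_of_nonneg_left (by positivity)
  refine ⟨2 * √n * K ^ e, by positivity, fun δ hδ hδ1 => ?_⟩
  set x := K / δ
  have hx : 1 ≤ x := (one_le_div hδ).2 (by linarith)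
  have hn3 : (3 : ℝ) ≤ n := by exact_mod_cast hn
  have he : 0 ≤ e := div_nonneg zero_le_two (by linarith)
  have hxe : 1 ≤ x ^ e := Real.one_le_rpow hx he
  set M := ⌈x ^ e⌉₊
  have hM : x ^ e ≤ M := Nat.le_ceil _
  have hM1 : 1 ≤ (M : ℝ) := hxe.trans hM
  refine ⟨M, ?_, ?_⟩
  · have hx_eq : x ^ e = K ^ e * δ ^ (-2 / ((n : ℝ) - 2)) := by
      rw [neg_div, Real.rpow_neg hδ.le, Real.div_rpow (by linarith) hδ.le, div_eq_mul_inv]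
    calc √n * M ≤ √n * (2 * x ^ e) := by
          gcongr
          linarith [Nat.ceil_lt_add_one (zero_le_one.trans hxe)]
      _ = 2 * √n * K ^ e * δ ^ (-2 / ((n : ℝ) - 2)) := by rw [hx_eq]; ring
  · have hlin : 2 * (A * (√n * M) / (δ / 2)) + 2 ≤ x * M :=
      calc 2 * (A * (√n * M) / (δ / 2)) + 2 = (4 * A * √n * M + 2 * δ) / δ := by
            field_simp
            ring
        _ ≤ (4 * A * √n * M + 2 * M) / δ := by gcongr; linarith
        _ = x * M := by simp only [x, K]; ring
    calc (2 * (A * (√n * M) / (δ / 2)) + 2) ^ 2 ≤ (x * M) ^ 2 := by gcongr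
      _ ≤ (M : ℝ) ^ n := sq_mul_le_pow_of_rpow_le (by omega) (by linarith) hM
      _ < ((M : ℝ) + 1) ^ n := by gcongr; exact lt_add_one _

/-- Lemma 3.1: Let `n ≥ 3` be an integer and `F : ℝ^n → ℂ` an `ℝ`-linear map with
`ker F ∩ ℤ^n = {0}`. There is `c > 0`, depending only on `n` and `F`, such that for
every `δ ∈ (0,1]` there is a nonzero `b ∈ ℤ^n` with `‖b‖₂ ≤ c·δ^{-2/(n-2)}` and
`0 < |F(b)| ≤ δ`. -/
theorem exists_small_nonzero_value (n : ℕ) (hn : 3 ≤ n)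
    (F : EuclideanSpace ℝ (Fin n) →ₗ[ℝ] ℂ)
    (hker : ∀ b : Fin n → ℤ, F (latticeVec n b) = 0 → b = 0) :
    ∃ c > (0 : ℝ), ∀ δ : ℝ, 0 < δ → δ ≤ 1 →
      ∃ b : Fin n → ℤ, b ≠ 0 ∧
        ‖latticeVec n b‖ ≤ c * δ ^ (-2 / ((n : ℝ) - 2)) ∧
        0 < ‖F (latticeVec n b)‖ ∧
        ‖F (latticeVec n b)‖ ≤ δ := by
  obtain ⟨c, hc, hbox⟩ := exists_box_size hn (norm_nonneg (LinearMap.toContinuousLinearMap F))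
  refine ⟨c, hc, fun δ hδ hδ1 => ?_⟩
  obtain ⟨M, hMc, hcard⟩ := hbox δ hδ hδ1
  obtain ⟨b, hb, hbM, hFb⟩ := exists_ne_zero_norm_latticeVec_le_of_card_lt
    (LinearMap.toContinuousLinearMap F) M (half_pos hδ) hcard
  refine ⟨b, hb, hbM.trans hMc, norm_pos_iff.2 fun h => hb (hker b h), ?_⟩
  exact (mul_div_cancel₀ δ two_ne_zero ▸ hFb).le
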